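/- arXiv:2504.10305 — 2 statements merged into one kernel-verified Lean document; each statement's English description precedes it below -/
import Mathlib

section
/- Let G be any group, k ≥ 1 and ℓ ≥ 2, and let a ∈ γ_k(G), b ∈ γ_ℓ(G). Then (a,b)⁻² · (a,b²) ∈ γ_{k+ℓ+2}(G), where (x,y) = x⁻¹y⁻¹xy. (This expresses the compatibility [x, h(y)] = h([x,y]) of the squaring operation h with the Lie bracket of the associated graded Lie algebra.) -/
/-- `γ_k(G)` for `k ≥ 1`, the lower central series in its classical indexing. -/
def gamma (G : Type*) [Group G] (k : ℕ) : Subgroup G := (⊤ : Subgroup G).lowerCentralSeries (k - 1)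

/-- The group commutator `(x, y) = x⁻¹y⁻¹xy`. -/
def grpComm {G : Type*} [Group G] (x y : G) : G := x⁻¹ * y⁻¹ * x * y

/-!
Since `(a, b²) = (a, b) · (a, b)^b`, the element `(a, b)⁻² (a, b²)` is `((a, b), b)`.
The lower central series satisfies `(γ_i, γ_j) ≤ γ_{i+j}` (three subgroups lemma, by induction
on `j`), so `((a, b), b) ∈ γ_{k+2ℓ} ≤ γ_{k+ℓ+2}` as `ℓ ≥ 2`.
-/

namespace Subgroup

variable {G : Type*} [Group G]

theorem commutator_commutator_le_of_rotate {H₁ H₂ H₃ N : Subgroup G} [N.Normal]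
    (h1 : ⁅⁅H₂, H₃⁆, H₁⁆ ≤ N) (h2 : ⁅⁅H₃, H₁⁆, H₂⁆ ≤ N) : ⁅⁅H₁, H₂⁆, H₃⁆ ≤ N := by
  have le_iff_map_eq_bot : ∀ {A B C : Subgroup G}, ⁅⁅A, B⁆, C⁆ ≤ N ↔
      ⁅⁅A.map (QuotientGroup.mk' N), B.map (QuotientGroup.mk' N)⁆,
        C.map (QuotientGroup.mk' N)⁆ = ⊥ := by
    intro A B C
    rw [← map_commutator, ← map_commutator, map_eq_bot_iff, QuotientGroup.ker_mk']
  rw [le_iff_map_eq_bot]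
  exact commutator_commutator_eq_bot_of_rotate (le_iff_map_eq_bot.mp h1)
    (le_iff_map_eq_bot.mp h2)

theorem commutator_lowerCentralSeries_le (m n : ℕ) :
    ⁅(⊤ : Subgroup G).lowerCentralSeries m, (⊤ : Subgroup G).lowerCentralSeries n⁆ ≤
      (⊤ : Subgroup G).lowerCentralSeries (m + n + 1) := by
  induction n generalizing m with
  | zero => rfl
  | succ n ih =>
    rw [commutator_comm, lowerCentralSeries_succ]
    apply commutator_commutator_le_of_rotate
    · rw [commutator_comm ⊤, ← lowerCentralSeries_succ]
      exact (ih (m + 1)).trans_eq (by ring_nf)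
    · rw [show m + (n + 1) + 1 = m + n + 1 + 1 by ring, lowerCentralSeries_succ]
      exact commutator_mono (ih m) le_rfl

end Subgroup

theorem gamma_antitone (G : Type*) [Group G] : Antitone (gamma G) :=
  fun _ _ hij => Subgroup.lowerCentralSeries_antitone _ (Nat.sub_le_sub_right hij 1)

open scoped commutatorElement in
theorem grpComm_eq_commutatorElement {G : Type*} [Group G] (x y : G) :
    grpComm x y = ⁅x⁻¹, y⁻¹⁆ := by
  simp only [grpComm, commutatorElement_def, inv_inv]

theorem grpComm_mem_gamma {G : Type*} [Group G] {i j : ℕ} (hj : 1 ≤ j) {x y : G}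
    (hx : x ∈ gamma G i) (hy : y ∈ gamma G j) : grpComm x y ∈ gamma G (i + j) := by
  rw [grpComm_eq_commutatorElement]
  have hxy := Subgroup.commutator_lowerCentralSeries_le (i - 1) (j - 1)
    (Subgroup.commutator_mem_commutator (inv_mem hx) (inv_mem hy))
  exact Subgroup.lowerCentralSeries_antitone _ (by omega) hxy

theorem inv_sq_mul_grpComm_sq {G : Type*} [Group G] (a b : G) :
    (grpComm a b)⁻¹ ^ 2 * grpComm a (b ^ 2) = grpComm (grpComm a b) b := by
  simp only [grpComm, pow_two, mul_inv_rev, inv_inv, mul_assoc, mul_inv_cancel_left]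

theorem squaring_bracket_compat_general {G : Type*} [Group G] (k ℓ : ℕ)
    (hl : 2 ≤ ℓ) (a b : G)
    (ha : a ∈ gamma G k) (hb : b ∈ gamma G ℓ) :
    (grpComm a b)⁻¹ ^ 2 * grpComm a (b ^ 2) ∈ gamma G (k + ℓ + 2) := by
  rw [inv_sq_mul_grpComm_sq]
  have hab : grpComm a b ∈ gamma G (k + ℓ) := grpComm_mem_gamma (by omega) ha hb
  have habb : grpComm (grpComm a b) b ∈ gamma G (k + ℓ + ℓ) := grpComm_mem_gamma (by omega) hab hb
  exact gamma_antitone G (by omega) habb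

/-- Let `G` be any group, `k ≥ 1` and `ℓ ≥ 2`, and let
`a ∈ γ_k(G)`, `b ∈ γ_ℓ(G)`.  Then `(a,b)⁻² · (a,b²) ∈ γ_{k+ℓ+2}(G)`, where
`(x,y) = x⁻¹y⁻¹xy`.  (Compatibility `[x, h(y)] = h([x,y])` of the squaring
operation with the Lie bracket of the associated graded Lie algebra.) -/
theorem squaring_bracket_compat {G : Type*} [Group G] (k ℓ : ℕ)
    (hk : 1 ≤ k) (hl : 2 ≤ ℓ) (a b : G)
    (ha : a ∈ gamma G k) (hb : b ∈ gamma G ℓ) :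
    (grpComm a b)⁻¹ ^ 2 * grpComm a (b ^ 2) ∈ gamma G (k + ℓ + 2) :=
  squaring_bracket_compat_general k ℓ hl a b ha hb
end

section
/- Let L be a Lie algebra over a commutative ring with unit, let p_1,…,p_n ∈ L, and for a subset I = {t_1 < t_2 < … < t_s} ⊆ [n] and x ∈ L write c_p(I, x) := ⁅p_{t_1}, ⁅p_{t_2}, … ⁅p_{t_s}, x⁆…⁆⁆, with c_p(∅, x) = x. Then for all x, y ∈ L and every subset I ⊆ [n]: c_p(I, ⁅x,y⁆) = Σ ⁅c_p(A, x), c_p(B, y)⁆, where the sum ranges over all ordered pairs (A, B) of disjoint subsets with A ∪ B = I. -/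
/-! Induct on `I`, peeling off its least element `t`, which is the outermost bracket of every
`c_p(I, ·)`. The Leibniz rule `⁅p t, ⁅u, v⁆⁆ = ⁅⁅p t, u⁆, v⁆ + ⁅u, ⁅p t, v⁆⁆` then sends `t` into
either the left or the right factor, matching the splitting of the subsets of `insert t J` into
those that avoid `t` and those that contain it. -/

/-- For `p : Fin n → L` and `I = {t₁ < t₂ < … < t_s} ⊆ [n]`, the nested
commutator `c_p(I, x) = ⁅p t₁, ⁅p t₂, … ⁅p t_s, x⁆…⁆⁆`, with `c_p(∅, x) = x`. -/
def cNest {R : Type*} {L : Type*} [CommRing R] [LieRing L] [LieAlgebra R L]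
    {n : ℕ} (p : Fin n → L) (I : Finset (Fin n)) (x : L) : L :=
  (I.sort (· ≤ ·)).foldr (fun t acc => ⁅p t, acc⁆) x

section

variable {R L : Type*} [CommRing R] [LieRing L] [LieAlgebra R L] {n : ℕ}

@[simp]
lemma cNest_empty (p : Fin n → L) (x : L) : cNest (R := R) p ∅ x = x := by
  simp [cNest]

lemma cNest_insert_of_lt (p : Fin n → L) {t : Fin n} {A : Finset (Fin n)}
    (h : ∀ b ∈ A, t < b) (x : L) :
    cNest (R := R) p (insert t A) x = ⁅p t, cNest (R := R) p A x⁆ := by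
  rw [cNest, Finset.sort_insert _ (fun b hb => (h b hb).le) fun ht => lt_irrefl t (h t ht),
    List.foldr_cons, cNest]

end

/-- Let `L` be a Lie algebra over a commutative ring, let
`p₁,…,p_n ∈ L`.  Then for all `x, y ∈ L` and every subset `I ⊆ [n]`,
`c_p(I, ⁅x,y⁆) = Σ ⁅c_p(A, x), c_p(B, y)⁆`, the sum ranging over all ordered
pairs `(A, B)` of disjoint subsets with `A ∪ B = I` (i.e. `A ⊆ I`, `B = I \ A`). -/
theorem cNest_lie {R : Type*} {L : Type*} [CommRing R] [LieRing L] [LieAlgebra R L]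
    {n : ℕ} (p : Fin n → L) (I : Finset (Fin n)) (x y : L) :
    cNest (R := R) p I ⁅x, y⁆ =
      ∑ A ∈ I.powerset, ⁅cNest (R := R) p A x, cNest (R := R) p (I \ A) y⁆ := by
  induction I using Finset.induction_on_min with
  | empty => simp
  | insert t J hlt ih =>
    have htJ : t ∉ J := fun ht => lt_irrefl t (hlt t ht)
    rw [cNest_insert_of_lt p hlt, ih, lie_sum, Finset.sum_powerset_insert htJ,
      ← Finset.sum_add_distrib]
    refine Finset.sum_congr rfl fun A hA => ?_
    have hAJ : A ⊆ J := Finset.mem_powerset.mp hA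
    have htA : t ∉ A := fun ht => htJ (hAJ ht)
    rw [Finset.insert_sdiff_of_notMem _ htA, Finset.insert_sdiff_insert,
      Finset.sdiff_insert_of_notMem htJ,
      cNest_insert_of_lt p fun b hb => hlt b (Finset.sdiff_subset hb),
      cNest_insert_of_lt p fun b hb => hlt b (hAJ hb), leibniz_lie, add_comm]
end
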